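/- Every nonzero homogeneous (with respect to total degree) polynomial lying in the intersection J_{P2} ∩ J_{K13} has total degree at least 4. Equivalently, the ideal J_{P2} ∩ J_{K13} is generated in degrees at least four. -/

import Mathlib

/-! A nonzero homogeneous `f ∈ J_{P2}` of degree `d` is `g * (x₁x₃ - y₁y₃)` with `g` homogeneous
of degree `d - 2`. A monomial substitution `x_k ↦ t ^ a_k`, `y_k ↦ t ^ b_k` into `K[t]` kills
`J_{K13}` but not `x₁x₃ - y₁y₃`, so, `K[t]` being a domain, it kills `g`. When the weights are
pairwise distinct, such a substitution sends the distinct monomials of a linear form to distinct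
powers of `t`, so it is injective on forms of degree at most one. Hence `d - 2 ≥ 2`. -/

/- Variables: the polynomial ring K[x1,x2,x3,x4,y1,y2,y3,y4] is modelled as
`MvPolynomial (Fin 4 ⊕ Fin 4) K`, where `x (k-1) = X (Sum.inl (k-1))` stands for x_k and
`y (k-1) = X (Sum.inr (k-1))` stands for y_k. -/

open MvPolynomial

noncomputable section

variable (K : Type*) [Field K]

/-- x_(i+1) -/
noncomputable def x (i : Fin 4) : MvPolynomial (Fin 4 ⊕ Fin 4) K := X (Sum.inl i)

/-- y_(i+1) -/
noncomputable def y (i : Fin 4) : MvPolynomial (Fin 4 ⊕ Fin 4) K := X (Sum.inr i)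

/-- The parity binomial edge ideal of the single edge {1,3}. -/
noncomputable def JP2 : Ideal (MvPolynomial (Fin 4 ⊕ Fin 4) K) :=
  Ideal.span {x K 0 * x K 2 - y K 0 * y K 2}

/-- The parity binomial edge ideal of the star with center 2 and leaves 1,3,4. -/
noncomputable def JK13 : Ideal (MvPolynomial (Fin 4 ⊕ Fin 4) K) :=
  Ideal.span {x K 0 * x K 1 - y K 0 * y K 1,
              x K 1 * x K 2 - y K 1 * y K 2,
              x K 1 * x K 3 - y K 1 * y K 3}

open scoped Polynomial

namespace MvPolynomial

variable {σ R : Type*} [CommSemiring R]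

attribute [local instance] MvPolynomial.gradedAlgebra in
theorem homogeneousComponent_mul_of_isHomogeneous_right {p q : MvPolynomial σ R} {k : ℕ}
    (hq : q.IsHomogeneous k) (n : ℕ) :
    homogeneousComponent n (p * q) =
      if k ≤ n then homogeneousComponent (n - k) p * q else 0 := by
  simpa only [← decomposition.decompose'_apply, DirectSum.Decomposition.decompose'_eq] using
    DirectSum.coe_decompose_mul_of_right_mem (homogeneousSubmodule σ R) (a := p) n
      ((mem_homogeneousSubmodule k q).2 hq)

theorem IsHomogeneous.exists_eq_mul_of_mem_span_singleton {f q : MvPolynomial σ R} {k n : ℕ}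
    (hf : f.IsHomogeneous n) (hq : q.IsHomogeneous k) (hfq : f ∈ Ideal.span {q}) :
    ∃ p : MvPolynomial σ R, p.IsHomogeneous (n - k) ∧ f = p * q := by
  obtain ⟨g, rfl⟩ := Ideal.mem_span_singleton'.1 hfq
  rw [← homogeneousComponent_eq_self hf, homogeneousComponent_mul_of_isHomogeneous_right hq]
  split_ifs
  · exact ⟨_, homogeneousComponent_isHomogeneous _ _, rfl⟩
  · exact ⟨0, isHomogeneous_zero _ _ _, (zero_mul q).symm⟩

theorem aeval_X_pow_monomial (w : σ → ℕ) (m : σ →₀ ℕ) (c : R) :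
    aeval (fun v => (Polynomial.X : R[X]) ^ w v) (monomial m c) =
      Polynomial.C c * Polynomial.X ^ Finsupp.weight w m := by
  rw [aeval_monomial, Finsupp.weight_apply, Finsupp.sum, Finsupp.prod,
    ← Finset.prod_pow_eq_pow_sum]
  simp [← pow_mul, mul_comm]

theorem coeff_aeval_X_pow_weight {w : σ → ℕ} {p : MvPolynomial σ R}
    (hw : Set.InjOn (Finsupp.weight w) (p.support : Set (σ →₀ ℕ))) {m : σ →₀ ℕ}
    (hm : m ∈ p.support) :
    (aeval (fun v => (Polynomial.X : R[X]) ^ w v) p).coeff (Finsupp.weight w m) = coeff m p := by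
  conv_lhs => rw [p.as_sum]
  rw [map_sum, Polynomial.finsetSum_coeff, Finset.sum_eq_single m]
  · simp [aeval_X_pow_monomial]
  · intro m' hm' hne
    have : Finsupp.weight w m ≠ Finsupp.weight w m' := fun h => hne (hw hm' hm h.symm)
    simp [aeval_X_pow_monomial, Polynomial.coeff_X_pow, this]
  · exact absurd hm

theorem eq_zero_of_aeval_X_pow_eq_zero_of_injOn {w : σ → ℕ} {p : MvPolynomial σ R}
    (hw : Set.InjOn (Finsupp.weight w) (p.support : Set (σ →₀ ℕ)))
    (hp : aeval (fun v => (Polynomial.X : R[X]) ^ w v) p = 0) : p = 0 := by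
  by_contra hne
  obtain ⟨m, hm⟩ := support_nonempty.2 hne
  have := coeff_aeval_X_pow_weight hw hm
  rw [hp, Polynomial.coeff_zero] at this
  exact mem_support_iff.1 hm this.symm

theorem injOn_weight_degree_eq_of_le_one {w : σ → ℕ} (hw : Function.Injective w) {n : ℕ}
    (hn : n ≤ 1) : Set.InjOn (Finsupp.weight w) {m | m.degree = n} := by
  interval_cases n
  · intro m hm m' hm' _
    simp only [Set.mem_ofPred_eq, Finsupp.degree_eq_zero_iff] at hm hm'
    rw [hm, hm']
  · rw [← Finsupp.range_single_one]
    rintro _ ⟨a, rfl⟩ _ ⟨b, rfl⟩ h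
    simp only [Finsupp.weight_single, one_smul] at h
    rw [hw h]

theorem IsHomogeneous.eq_zero_of_aeval_X_pow_eq_zero {w : σ → ℕ} (hw : Function.Injective w)
    {p : MvPolynomial σ R} {n : ℕ} (hp : p.IsHomogeneous n) (hn : n ≤ 1)
    (h : MvPolynomial.aeval (fun v => (Polynomial.X : R[X]) ^ w v) p = 0) : p = 0 :=
  eq_zero_of_aeval_X_pow_eq_zero_of_injOn
    ((injOn_weight_degree_eq_of_le_one hw hn).mono fun _ hm => by
      rw [Set.mem_ofPred_eq, Finsupp.degree_eq_weight_one]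
      exact hp (mem_support_iff.1 hm)) h

end MvPolynomial

-- `x_k ↦ t ^ a_k`, `y_k ↦ t ^ b_k` with `b_2 = a_2 + 1` and `b_k = a_k - 1` for `k ≠ 2`, so that
-- each binomial `x_2 x_k - y_2 y_k` of the star becomes `0`, while `x_1 x_3 - y_1 y_3` becomes
-- `t ^ 10 - t ^ 8`.
def starWeight : Fin 4 ⊕ Fin 4 → ℕ := Sum.elim ![4, 1, 6, 8] ![3, 2, 5, 7]

def starSubst : MvPolynomial (Fin 4 ⊕ Fin 4) K →ₐ[K] K[X] :=
  aeval fun v => Polynomial.X ^ starWeight v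

theorem starWeight_injective : Function.Injective starWeight := by
  decide

theorem JK13_le_ker_starSubst : JK13 K ≤ RingHom.ker (starSubst K) := by
  simp only [JK13, Ideal.span_le, Set.insert_subset_iff, Set.singleton_subset_iff,
    SetLike.mem_coe, RingHom.mem_ker]
  simp only [starSubst, starWeight, x, y, map_sub, map_mul, aeval_X, Sum.elim_inl, Sum.elim_inr]
  exact ⟨by simp; ring, by simp; ring, by simp; ring⟩

theorem starSubst_JP2_generator_ne_zero : starSubst K (x K 0 * x K 2 - y K 0 * y K 2) ≠ 0 := by
  have h : starSubst K (x K 0 * x K 2 - y K 0 * y K 2) = Polynomial.X ^ 10 - Polynomial.X ^ 8 := by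
    simp [starSubst, starWeight, x, y, ← pow_add]
  rw [h, sub_ne_zero]
  intro heq
  simpa using congrArg Polynomial.natDegree heq

theorem isHomogeneous_JP2_generator : (x K 0 * x K 2 - y K 0 * y K 2).IsHomogeneous 2 :=
  ((isHomogeneous_X K _).mul (isHomogeneous_X K _)).sub
    ((isHomogeneous_X K _).mul (isHomogeneous_X K _))

/-- Every nonzero homogeneous polynomial in J_{P2} ∩ J_{K13} has total degree at least 4. -/
theorem JP2_inter_JK13_generated_in_degree_ge_four
    (f : MvPolynomial (Fin 4 ⊕ Fin 4) K) (d : ℕ)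
    (hf : f ∈ JP2 K ⊓ JK13 K) (hhom : f.IsHomogeneous d) (hne : f ≠ 0) :
    4 ≤ d := by
  obtain ⟨hfP, hfK⟩ := Submodule.mem_inf.1 hf
  obtain ⟨g, hg, rfl⟩ :=
    hhom.exists_eq_mul_of_mem_span_singleton (isHomogeneous_JP2_generator K) hfP
  by_contra! hd
  have hg0 : starSubst K g = 0 := by
    have := JK13_le_ker_starSubst K hfK
    rwa [RingHom.mem_ker, map_mul, mul_eq_zero,
      or_iff_left (starSubst_JP2_generator_ne_zero K)] at this
  refine hne ?_
  rw [hg.eq_zero_of_aeval_X_pow_eq_zero starWeight_injective (by omega) hg0, zero_mul]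

end
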